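/- Let d ≥ 2, p ∈ (2d/(d+1), 2), set α_p = p(d+1) − 2d, and let k ∈ (0, α_p). Then for every nonnegative measurable ρ on ℝ^d with ρ^{1/p'} ∈ W^{1,p}(ℝ^d) and ∫ ρ(x)⟨x⟩^k dx < ∞, one has ∫_{ℝ^d} |∇ρ|^{p−1} |∇(⟨x⟩^k)| dx ≤ k (∫_{ℝ^d} ρ(x) ⟨x⟩^k dx)^{1/p'} · I_p(ρ)^{1/p'} · (∫_{ℝ^d} ⟨x⟩^{(k−p)/(2−p)} dx)^{(2−p)/p}, where the last integral is finite. -/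

import Mathlib

open MeasureTheory Real Set
open scoped ENNReal NNReal

noncomputable section

abbrev Ed (d : ℕ) := EuclideanSpace ℝ (Fin d)

def jap {d : ℕ} (x : Ed d) : ℝ := Real.sqrt (1 + ‖x‖ ^ 2)

def LqNorm {d : ℕ} (q : ℝ) (f : Ed d → ℝ) : ℝ := (∫ x : Ed d, |f x| ^ q) ^ (1 / q)

def pconj (p : ℝ) : ℝ := p / (p - 1)

def pstar (d : ℕ) (p : ℝ) : ℝ := d * p / (d - p)

def alphaP (d : ℕ) (p : ℝ) : ℝ := p * (d + 1) - 2 * d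

def MemW1p {d : ℕ} (p : ℝ) (u : Ed d → ℝ) : Prop :=
  Differentiable ℝ u ∧ MemLp u (ENNReal.ofReal p) volume ∧
    MemLp (fun x => ‖gradient u x‖) (ENNReal.ofReal p) volume

def fisherInfo {d : ℕ} (p : ℝ) (ρ : Ed d → ℝ) : ℝ :=
  pconj p ^ p * ∫ x : Ed d, ‖gradient (fun y => ρ y ^ ((p - 1) / p)) x‖ ^ p

def Kker (d : ℕ) (α : ℝ) (x : Ed d) : Ed d := ‖x‖ ^ (-α) • x

/-!
With `u = ρ^{1/p'}` one has `|∇ρ|^{p-1} = (p')^{p-1} u |∇u|^{p-1}`, while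
`|∇⟨x⟩^k| ≤ k ⟨x⟩^{k-1}` and `⟨x⟩^{k-1} = ⟨x⟩^{k/p'} ⟨x⟩^{(k-p)/p}`. The integrand is therefore
at most `k (p')^{p-1} (ρ⟨x⟩^k)^{1/p'} (|∇u|^p)^{1/p'} (⟨x⟩^{(k-p)/(2-p)})^{(2-p)/p}`, and Hölder's
inequality for three functions with weights `1/p' + 1/p' + (2-p)/p = 1` gives the bound. The
condition `k < α_p` is exactly `(p-k)/(2-p) > d`, which makes `⟨x⟩^{(k-p)/(2-p)}` integrable.
-/

section Holder

variable {α : Type*} [MeasurableSpace α] {μ : Measure α} {f g h : α → ℝ} {a b c : ℝ}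

theorem MeasureTheory.Integrable.rpow_mul_rpow_mul_rpow (hf : Integrable f μ) (hg : Integrable g μ)
    (hh : Integrable h μ) (hf0 : 0 ≤ f) (hg0 : 0 ≤ g) (hh0 : 0 ≤ h)
    (ha : 0 ≤ a) (hb : 0 ≤ b) (hc : 0 ≤ c) (habc : a + b + c = 1) :
    Integrable (fun x => f x ^ a * g x ^ b * h x ^ c) μ := by
  refine (((hf.const_mul a).add (hg.const_mul b)).add (hh.const_mul c)).mono' ?_
    (ae_of_all _ fun x => ?_)
  · exact (((hf.aemeasurable.pow_const a).mul (hg.aemeasurable.pow_const b)).mul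
      (hh.aemeasurable.pow_const c)).aestronglyMeasurable
  · rw [Real.norm_of_nonneg (mul_nonneg (mul_nonneg (rpow_nonneg (hf0 x) a)
      (rpow_nonneg (hg0 x) b)) (rpow_nonneg (hh0 x) c))]
    exact geom_mean_le_arith_mean3_weighted ha hb hc (hf0 x) (hg0 x) (hh0 x) habc

theorem ENNReal.ofReal_rpow_mul_rpow_mul_rpow {x y z : ℝ} (hx : 0 ≤ x) (hy : 0 ≤ y) (hz : 0 ≤ z)
    (ha : 0 ≤ a) (hb : 0 ≤ b) (hc : 0 ≤ c) :
    ENNReal.ofReal (x ^ a * y ^ b * z ^ c) =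
      ENNReal.ofReal x ^ a * ENNReal.ofReal y ^ b * ENNReal.ofReal z ^ c := by
  rw [ENNReal.ofReal_mul (mul_nonneg (rpow_nonneg hx a) (rpow_nonneg hy b)),
    ENNReal.ofReal_mul (rpow_nonneg hx a), ENNReal.ofReal_rpow_of_nonneg hx ha,
    ENNReal.ofReal_rpow_of_nonneg hy hb, ENNReal.ofReal_rpow_of_nonneg hz hc]

theorem integral_rpow_mul_rpow_mul_rpow_le (hf : Integrable f μ) (hg : Integrable g μ)
    (hh : Integrable h μ) (hf0 : 0 ≤ f) (hg0 : 0 ≤ g) (hh0 : 0 ≤ h)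
    (ha : 0 ≤ a) (hb : 0 ≤ b) (hc : 0 ≤ c) (habc : a + b + c = 1) :
    ∫ x, f x ^ a * g x ^ b * h x ^ c ∂μ ≤
      (∫ x, f x ∂μ) ^ a * (∫ x, g x ∂μ) ^ b * (∫ x, h x ∂μ) ^ c := by
  have hofReal : ∀ F : α → ℝ, Integrable F μ → 0 ≤ F →
      ∫⁻ x, ENNReal.ofReal (F x) ∂μ = ENNReal.ofReal (∫ x, F x ∂μ) := fun F hF hF0 =>
    (ofReal_integral_eq_lintegral_ofReal hF (ae_of_all _ hF0)).symm
  have hHolder := ENNReal.lintegral_prod_norm_pow_le (μ := μ) Finset.univ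
    (f := ![fun x => ENNReal.ofReal (f x), fun x => ENNReal.ofReal (g x),
      fun x => ENNReal.ofReal (h x)]) (p := ![a, b, c])
    (by simp [Fin.forall_fin_succ, hf.aemeasurable.ennreal_ofReal, hg.aemeasurable.ennreal_ofReal,
      hh.aemeasurable.ennreal_ofReal])
    (by simp [Fin.sum_univ_three, habc]) (by simp [Fin.forall_fin_succ, ha, hb, hc])
  simp only [Fin.prod_univ_three, Matrix.cons_val_zero, Matrix.cons_val_one, Matrix.cons_val_two,
    Matrix.head_cons, Matrix.tail_cons, hofReal f hf hf0, hofReal g hg hg0, hofReal h hh hh0,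
    ← ENNReal.ofReal_rpow_mul_rpow_mul_rpow (integral_nonneg hf0) (integral_nonneg hg0)
      (integral_nonneg hh0) ha hb hc] at hHolder
  have hprod0 : ∀ {x y z : ℝ}, 0 ≤ x → 0 ≤ y → 0 ≤ z → 0 ≤ x ^ a * y ^ b * z ^ c :=
    fun hx hy hz => mul_nonneg (mul_nonneg (rpow_nonneg hx a) (rpow_nonneg hy b)) (rpow_nonneg hz c)
  rw [integral_eq_lintegral_of_nonneg_ae (ae_of_all _ fun x => hprod0 (hf0 x) (hg0 x) (hh0 x))
    (hf.rpow_mul_rpow_mul_rpow hg hh hf0 hg0 hh0 ha hb hc habc).1]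
  refine ENNReal.toReal_le_of_le_ofReal
    (hprod0 (integral_nonneg hf0) (integral_nonneg hg0) (integral_nonneg hh0))
    (le_of_eq_of_le (lintegral_congr fun x => ?_) hHolder)
  exact ENNReal.ofReal_rpow_mul_rpow_mul_rpow (hf0 x) (hg0 x) (hh0 x) ha hb hc

end Holder

theorem pconj_pos {p : ℝ} (hp : 1 < p) : 0 < pconj p :=
  div_pos (by linarith) (by linarith)

theorem one_lt_of_two_mul_div_lt {d : ℕ} {p : ℝ} (hd : 2 ≤ d)
    (hp : 2 * (d : ℝ) / ((d : ℝ) + 1) < p) : 1 < p := by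
  have hd' : (2 : ℝ) ≤ d := by exact_mod_cast hd
  have : (1 : ℝ) < 2 * d / (d + 1) := by rw [lt_div_iff₀ (by linarith)]; linarith
  linarith

theorem lt_neg_div_of_lt_alphaP {d : ℕ} {p k : ℝ} (hp : p < 2) (hk : k < alphaP d p) :
    (d : ℝ) < -((k - p) / (2 - p)) := by
  rw [← neg_div, neg_sub, lt_div_iff₀ (by linarith)]
  unfold alphaP at hk
  linarith

section Gradient

variable {E : Type*} [NormedAddCommGroup E] [InnerProductSpace ℝ E] [CompleteSpace E]

theorem norm_gradient_eq_norm_fderiv (f : E → ℝ) (x : E) : ‖gradient f x‖ = ‖fderiv ℝ f x‖ := by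
  rw [gradient, LinearIsometryEquiv.norm_map]

theorem measurable_norm_gradient [MeasurableSpace E] [OpensMeasurableSpace E] (f : E → ℝ) :
    Measurable fun x => ‖gradient f x‖ := by
  simp only [norm_gradient_eq_norm_fderiv]
  exact (measurable_fderiv ℝ f).norm

theorem norm_gradient_rpow {u : E → ℝ} {x : E} (hu : DifferentiableAt ℝ u x) (hux : 0 ≤ u x)
    {q : ℝ} (hq : 1 ≤ q) :
    ‖gradient (fun y => u y ^ q) x‖ = q * u x ^ (q - 1) * ‖gradient u x‖ := by
  rw [norm_gradient_eq_norm_fderiv, norm_gradient_eq_norm_fderiv,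
    (hu.hasFDerivAt.rpow_const (Or.inr hq)).fderiv, norm_smul,
    Real.norm_of_nonneg (mul_nonneg (by linarith) (rpow_nonneg hux _))]

theorem norm_gradient_rpow_sub_one_eq_pconj {p : ℝ} (hp : 1 < p) {ρ : E → ℝ} (hρ0 : ∀ x, 0 ≤ ρ x)
    {x : E} (hu : DifferentiableAt ℝ (fun y => ρ y ^ ((p - 1) / p)) x) :
    ‖gradient ρ x‖ ^ (p - 1) =
      pconj p ^ (p - 1) * ρ x ^ ((p - 1) / p) *
        ‖gradient (fun y => ρ y ^ ((p - 1) / p)) x‖ ^ (p - 1) := by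
  have hp0 : p ≠ 0 := by positivity
  have hp1 : p - 1 ≠ 0 := by linarith
  have hu0 : 0 ≤ ρ x ^ ((p - 1) / p) := rpow_nonneg (hρ0 x) _
  have hexp : (p - 1) / p * pconj p = 1 := by unfold pconj; field_simp
  have hρu : ρ = fun y => (ρ y ^ ((p - 1) / p)) ^ pconj p := funext fun y => by
    rw [← rpow_mul (hρ0 y), hexp, rpow_one]
  have hpconj : (pconj p - 1) * (p - 1) = 1 := by unfold pconj; field_simp; ring
  have hpconj1 : 1 ≤ pconj p := by unfold pconj; rw [le_div_iff₀ (by linarith)]; linarith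
  conv_lhs => rw [hρu, norm_gradient_rpow hu hu0 hpconj1]
  rw [mul_rpow (mul_nonneg (pconj_pos hp).le (rpow_nonneg hu0 _)) (norm_nonneg _),
    mul_rpow (pconj_pos hp).le (rpow_nonneg hu0 _), ← rpow_mul hu0, hpconj, rpow_one]

end Gradient

section Japanese

variable {d : ℕ}

theorem jap_pos (x : Ed d) : 0 < jap x := Real.sqrt_pos.2 (by positivity)

theorem norm_le_jap (x : Ed d) : ‖x‖ ≤ jap x :=
  Real.le_sqrt_of_sq_le (by linarith)

theorem hasGradientAt_jap_rpow (k : ℝ) (x : Ed d) :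
    HasGradientAt (fun y => jap y ^ k) ((k * jap x ^ (k - 2)) • x) x := by
  have h : HasFDerivAt (fun y : Ed d => √(1 + ‖y‖ ^ 2) ^ k) _ x :=
    (((hasFDerivAt_id x).norm_sq.const_add 1).sqrt (by positivity)).rpow_const
      (Or.inl (jap_pos x).ne')
  rw [hasGradientAt_iff_hasFDerivAt]
  refine h.congr_fderiv (ContinuousLinearMap.ext fun v => ?_)
  have hj : √(1 + ‖x‖ ^ 2) = jap x := rfl
  simp only [id_eq, hj, one_div, mul_inv_rev, ContinuousLinearMap.comp_id, smul_apply,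
    coe_innerSL_apply, nsmul_eq_mul, Nat.cast_ofNat, smul_eq_mul, map_smul,
    InnerProductSpace.toDual_apply_apply]
  rw [show k - 1 = k - 2 + 1 by ring, rpow_add_one (jap_pos x).ne']
  field_simp [(jap_pos x).ne']

theorem norm_gradient_jap_rpow_le {k : ℝ} (hk : 0 ≤ k) (x : Ed d) :
    ‖gradient (fun y => jap y ^ k) x‖ ≤ k * jap x ^ (k - 1) := by
  rw [(hasGradientAt_jap_rpow k x).gradient, norm_smul,
    Real.norm_of_nonneg (mul_nonneg hk (rpow_nonneg (jap_pos x).le _)),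
    show k - 1 = k - 2 + 1 by ring, rpow_add_one (jap_pos x).ne', mul_assoc]
  exact mul_le_mul_of_nonneg_left
    (mul_le_mul_of_nonneg_left (norm_le_jap x) (rpow_nonneg (jap_pos x).le _)) hk

theorem jap_rpow (x : Ed d) (e : ℝ) : jap x ^ e = (1 + ‖x‖ ^ 2) ^ (e / 2) := by
  rw [jap, sqrt_eq_rpow, ← rpow_mul (by positivity), one_div_mul_eq_div]

theorem integrable_jap_rpow {e : ℝ} (he : (d : ℝ) < -e) :
    Integrable fun x : Ed d => jap x ^ e := by
  refine (integrable_rpow_neg_one_add_norm_sq (r := -e) (by rwa [finrank_euclideanSpace_fin])).congr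
    (ae_of_all _ fun x => ?_)
  dsimp only
  rw [jap_rpow, neg_neg]

end Japanese

section FisherMoment

variable {d : ℕ}

theorem MemW1p.integrable_norm_gradient_rpow {p : ℝ} (hp : 0 < p) {u : Ed d → ℝ}
    (hu : MemW1p p u) : Integrable fun x => ‖gradient u x‖ ^ p := by
  simpa only [norm_norm, ENNReal.toReal_ofReal hp.le] using
    hu.2.2.integrable_norm_rpow (ENNReal.ofReal_pos.2 hp).ne' ENNReal.ofReal_ne_top

theorem fisherInfo_rpow {p : ℝ} (hp : 1 < p) (ρ : Ed d → ℝ) :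
    fisherInfo p ρ ^ ((p - 1) / p) =
      pconj p ^ (p - 1) *
        (∫ x, ‖gradient (fun y => ρ y ^ ((p - 1) / p)) x‖ ^ p) ^ ((p - 1) / p) := by
  rw [fisherInfo, mul_rpow (rpow_nonneg (pconj_pos hp).le _)
      (integral_nonneg fun x => rpow_nonneg (norm_nonneg _) _),
    ← rpow_mul (pconj_pos hp).le, show p * ((p - 1) / p) = p - 1 by field_simp]

theorem norm_gradient_rpow_mul_norm_gradient_jap_rpow_le {p k : ℝ} (hp1 : 1 < p) (hp2 : p < 2)
    (hk : 0 ≤ k) {ρ : Ed d → ℝ} (hρ0 : ∀ x, 0 ≤ ρ x) {x : Ed d}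
    (hu : DifferentiableAt ℝ (fun y => ρ y ^ ((p - 1) / p)) x) :
    ‖gradient ρ x‖ ^ (p - 1) * ‖gradient (fun y => jap y ^ k) x‖ ≤
      k * pconj p ^ (p - 1) *
        ((ρ x * jap x ^ k) ^ ((p - 1) / p) *
          (‖gradient (fun y => ρ y ^ ((p - 1) / p)) x‖ ^ p) ^ ((p - 1) / p) *
          (jap x ^ ((k - p) / (2 - p))) ^ ((2 - p) / p)) := by
  set G := ‖gradient (fun y => ρ y ^ ((p - 1) / p)) x‖
  have hj := (jap_pos x).le
  have hsplit : jap x ^ (k * ((p - 1) / p)) * jap x ^ ((k - p) / (2 - p) * ((2 - p) / p)) =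
      jap x ^ (k - 1) := by
    have : p ≠ 0 := by positivity
    have : 2 - p ≠ 0 := by linarith
    rw [← rpow_add (jap_pos x)]
    congr 1
    field_simp
    ring
  rw [norm_gradient_rpow_sub_one_eq_pconj hp1 hρ0 hu, mul_rpow (hρ0 x) (rpow_nonneg hj _),
    ← rpow_mul hj, ← rpow_mul (norm_nonneg _), ← rpow_mul hj,
    show p * ((p - 1) / p) = p - 1 by field_simp]
  calc _ ≤ pconj p ^ (p - 1) * ρ x ^ ((p - 1) / p) * G ^ (p - 1) * (k * jap x ^ (k - 1)) :=
        mul_le_mul_of_nonneg_left (norm_gradient_jap_rpow_le hk x)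
          (mul_nonneg (mul_nonneg (rpow_nonneg (pconj_pos hp1).le _) (rpow_nonneg (hρ0 x) _))
            (rpow_nonneg (norm_nonneg _) _))
    _ = _ := by rw [← hsplit]; ring

theorem integrable_and_integral_norm_gradient_mul_norm_gradient_jap_rpow_le {p k : ℝ} (hp1 : 1 < p)
    (hp2 : p < 2) (hk : 0 ≤ k) {ρ : Ed d → ℝ} (hρ0 : ∀ x, 0 ≤ ρ x)
    (hu : Differentiable ℝ fun y => ρ y ^ ((p - 1) / p))
    (hmom : Integrable fun x => ρ x * jap x ^ k)
    (hB : Integrable fun x => ‖gradient (fun y => ρ y ^ ((p - 1) / p)) x‖ ^ p)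
    (hC : Integrable fun x : Ed d => jap x ^ ((k - p) / (2 - p))) :
    (Integrable fun x => ‖gradient ρ x‖ ^ (p - 1) * ‖gradient (fun y => jap y ^ k) x‖) ∧
      ∫ x, ‖gradient ρ x‖ ^ (p - 1) * ‖gradient (fun y => jap y ^ k) x‖ ≤
        k * pconj p ^ (p - 1) *
          ((∫ x, ρ x * jap x ^ k) ^ ((p - 1) / p) *
            (∫ x, ‖gradient (fun y => ρ y ^ ((p - 1) / p)) x‖ ^ p) ^ ((p - 1) / p) *
            (∫ x : Ed d, jap x ^ ((k - p) / (2 - p))) ^ ((2 - p) / p)) := by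
  have ha : 0 ≤ (p - 1) / p := div_nonneg (by linarith) (by linarith)
  have hc : 0 ≤ (2 - p) / p := div_nonneg (by linarith) (by linarith)
  have habc : (p - 1) / p + (p - 1) / p + (2 - p) / p = 1 := by field_simp; ring
  have hf0 : 0 ≤ fun x => ρ x * jap x ^ k := fun x =>
    mul_nonneg (hρ0 x) (rpow_nonneg (jap_pos x).le _)
  have hg0 : 0 ≤ fun x => ‖gradient (fun y => ρ y ^ ((p - 1) / p)) x‖ ^ p := fun x =>
    rpow_nonneg (norm_nonneg _) _
  have hh0 : 0 ≤ fun x : Ed d => jap x ^ ((k - p) / (2 - p)) := fun x =>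
    rpow_nonneg (jap_pos x).le _
  have hH := (hmom.rpow_mul_rpow_mul_rpow hB hC hf0 hg0 hh0 ha ha hc habc).const_mul
    (k * pconj p ^ (p - 1))
  have hle := fun x => norm_gradient_rpow_mul_norm_gradient_jap_rpow_le hp1 hp2 hk hρ0 (hu x)
  have hF : Integrable fun x =>
      ‖gradient ρ x‖ ^ (p - 1) * ‖gradient (fun y => jap y ^ k) x‖ :=
    hH.mono' (((measurable_norm_gradient ρ).pow_const _).mul
        (measurable_norm_gradient _)).aestronglyMeasurable
      (ae_of_all _ fun x => by
        rw [norm_of_nonneg (mul_nonneg (rpow_nonneg (norm_nonneg _) _) (norm_nonneg _))]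
        exact hle x)
  refine ⟨hF, (integral_mono hF hH hle).trans ?_⟩
  rw [integral_const_mul]
  exact mul_le_mul_of_nonneg_left
    (integral_rpow_mul_rpow_mul_rpow_le hmom hB hC hf0 hg0 hh0 ha ha hc habc)
    (mul_nonneg hk (rpow_nonneg (pconj_pos hp1).le _))

end FisherMoment

theorem statement4_general (d : ℕ) (p k : ℝ) (hd : 2 ≤ d)
    (hp1 : 2 * (d : ℝ) / ((d : ℝ) + 1) < p) (hp2 : p < 2)
    (hk0 : 0 < k) (hk1 : k < alphaP d p)
    (ρ : Ed d → ℝ) (hρ0 : ∀ x, 0 ≤ ρ x)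
    (hW : MemW1p p fun x => ρ x ^ ((p - 1) / p))
    (hmom : Integrable fun x => ρ x * jap x ^ k) :
    Integrable (fun x : Ed d => jap x ^ ((k - p) / (2 - p))) ∧
      (Integrable fun x =>
        ‖gradient ρ x‖ ^ (p - 1) * ‖gradient (fun y => jap y ^ k) x‖) ∧
      (∫ x : Ed d, ‖gradient ρ x‖ ^ (p - 1) * ‖gradient (fun y => jap y ^ k) x‖) ≤
        k * (∫ x : Ed d, ρ x * jap x ^ k) ^ ((p - 1) / p) *
          fisherInfo p ρ ^ ((p - 1) / p) *
          (∫ x : Ed d, jap x ^ ((k - p) / (2 - p))) ^ ((2 - p) / p) := by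
  have hp : 1 < p := one_lt_of_two_mul_div_lt hd hp1
  have hC := integrable_jap_rpow (lt_neg_div_of_lt_alphaP hp2 hk1)
  obtain ⟨hF, hle⟩ := integrable_and_integral_norm_gradient_mul_norm_gradient_jap_rpow_le hp hp2
    hk0.le hρ0 hW.1 hmom (hW.integrable_norm_gradient_rpow (by linarith)) hC
  refine ⟨hC, hF, hle.trans_eq ?_⟩
  rw [fisherInfo_rpow hp]
  ring

/-- for `p ∈ (2d/(d+1), 2)` and `k ∈ (0, α_p)`,
`∫ |∇ρ|^{p-1} |∇(⟨x⟩^k)| dx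
  ≤ k (∫ ρ ⟨x⟩^k)^{1/p'} I_p(ρ)^{1/p'} (∫ ⟨x⟩^{(k-p)/(2-p)})^{(2-p)/p}`,
the last integral being finite. -/
theorem statement4 (d : ℕ) (p k : ℝ) (hd : 2 ≤ d)
    (hp1 : 2 * (d : ℝ) / ((d : ℝ) + 1) < p) (hp2 : p < 2)
    (hk0 : 0 < k) (hk1 : k < alphaP d p)
    (ρ : Ed d → ℝ) (hρ0 : ∀ x, 0 ≤ ρ x) (hρmeas : Measurable ρ)
    (hρdiff : Differentiable ℝ ρ)
    (hW : MemW1p p fun x => ρ x ^ ((p - 1) / p))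
    (hmom : Integrable fun x => ρ x * jap x ^ k) :
    Integrable (fun x : Ed d => jap x ^ ((k - p) / (2 - p))) ∧
      (Integrable fun x =>
        ‖gradient ρ x‖ ^ (p - 1) * ‖gradient (fun y => jap y ^ k) x‖) ∧
      (∫ x : Ed d, ‖gradient ρ x‖ ^ (p - 1) * ‖gradient (fun y => jap y ^ k) x‖) ≤
        k * (∫ x : Ed d, ρ x * jap x ^ k) ^ ((p - 1) / p) *
          fisherInfo p ρ ^ ((p - 1) / p) *
          (∫ x : Ed d, jap x ^ ((k - p) / (2 - p))) ^ ((2 - p) / p) :=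
  statement4_general d p k hd hp1 hp2 hk0 hk1 ρ hρ0 hW hmom
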